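/- Let B_1 be an M×n complex matrix, B_2 a (p−M)×n complex matrix, B the p×n matrix obtained by stacking B_1 on top of B_2, and let l ≠ 0 be a scalar such that l·I_{p−M} − (1/n)B_2 B_2* is invertible. Then l·I_n − (1/n)B_2* B_2 is also invertible, and det( l·I_p − (1/n) B B* ) = 0 if and only if det( I_M − (1/n) B_1 ( l·I_n − (1/n) B_2* B_2 )^{-1} B_1* ) = 0. -/

import Mathlib

/-!
Write `B = [B₁; B₂]` and `D = l - B₂B₂ᴴ/n`. The push-through identity
`(l - B₂ᴴB₂/n)⁻¹ = l⁻¹ (1 + B₂ᴴ D⁻¹ B₂/n)` exhibits the inverse of `S = l - B₂ᴴB₂/n`.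
Taking the Schur complement of the invertible block `D` in the block matrix `l - BBᴴ/n`, and
simplifying it with the same identity, gives
`det (l - BBᴴ/n) = det D · l^M · det (1 - B₁ S⁻¹ B₁ᴴ/n)`,
and the first two factors are nonzero.
-/

open Matrix

namespace Matrix

variable {𝕜 : Type*} [Field 𝕜] {m k r : Type*} [Fintype k] [DecidableEq m] [DecidableEq r]

section PushThrough

variable [Fintype m] [DecidableEq k] (A : Matrix m k 𝕜) (B : Matrix k m 𝕜) {l : 𝕜}

theorem smul_one_sub_mul_mul_smul_one_add_eq_one (hl : l ≠ 0) (hD : IsUnit (l • 1 - A * B)) :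
    (l • 1 - B * A) * (l⁻¹ • (1 + B * (l • 1 - A * B)⁻¹ * A)) = 1 := by
  have hcomm : (l • 1 - B * A) * B = B * (l • 1 - A * B) := by
    simp only [Matrix.sub_mul, Matrix.mul_sub, Matrix.smul_mul, Matrix.mul_smul, Matrix.one_mul,
      Matrix.mul_one, Matrix.mul_assoc]
  have hcancel : (l • 1 - B * A) * (B * (l • 1 - A * B)⁻¹ * A) = B * A := by
    rw [Matrix.mul_assoc B, ← Matrix.mul_assoc, hcomm, Matrix.mul_assoc, ← Matrix.mul_assoc _ _ A,
      mul_nonsing_inv _ ((isUnit_iff_isUnit_det _).mp hD), Matrix.one_mul]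
  rw [Matrix.mul_smul, Matrix.mul_add, Matrix.mul_one, hcancel, sub_add_cancel, smul_smul,
    inv_mul_cancel₀ hl, one_smul]

theorem inv_smul_one_sub_mul_comm (hl : l ≠ 0) (hD : IsUnit (l • 1 - A * B)) :
    (l • 1 - B * A)⁻¹ = l⁻¹ • (1 + B * (l • 1 - A * B)⁻¹ * A) :=
  inv_eq_right_inv (smul_one_sub_mul_mul_smul_one_add_eq_one A B hl hD)

theorem isUnit_smul_one_sub_mul_comm (hl : l ≠ 0) (hD : IsUnit (l • 1 - A * B)) :
    IsUnit (l • 1 - B * A) :=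
  (isUnit_iff_isUnit_det _).mpr
    (isUnit_det_of_right_inverse (smul_one_sub_mul_mul_smul_one_add_eq_one A B hl hD))

end PushThrough

section Schur

variable (X₁ : Matrix m k 𝕜) (X₂ : Matrix r k 𝕜) (Y₁ : Matrix k m 𝕜) (Y₂ : Matrix k r 𝕜) (l : 𝕜)

theorem smul_one_sub_fromRows_mul_fromCols :
    l • 1 - fromRows X₁ X₂ * fromCols Y₁ Y₂
      = fromBlocks (l • 1 - X₁ * Y₁) (-(X₁ * Y₂)) (-(X₂ * Y₁)) (l • 1 - X₂ * Y₂) := by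
  rw [fromRows_mul_fromCols, ← fromBlocks_one, fromBlocks_smul, sub_eq_add_neg, fromBlocks_neg,
    fromBlocks_add]
  simp only [smul_zero, zero_add, sub_eq_add_neg]

variable {l} [Fintype m] [Fintype r] [DecidableEq k]

theorem det_smul_one_sub_fromRows_mul_fromCols (hl : l ≠ 0) (hD : IsUnit (l • 1 - X₂ * Y₂)) :
    (l • 1 - fromRows X₁ X₂ * fromCols Y₁ Y₂).det
      = (l • 1 - X₂ * Y₂).det * (l ^ Fintype.card m * (1 - X₁ * (l • 1 - Y₂ * X₂)⁻¹ * Y₁).det) := by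
  have : Invertible (l • 1 - X₂ * Y₂) := hD.invertible
  have hschur : l • 1 - X₁ * Y₁ - -(X₁ * Y₂) * ⅟(l • 1 - X₂ * Y₂) * -(X₂ * Y₁)
      = l • (1 - X₁ * (l • 1 - Y₂ * X₂)⁻¹ * Y₁) := by
    rw [inv_smul_one_sub_mul_comm X₂ Y₂ hl hD, invOf_eq_nonsing_inv]
    simp only [smul_sub, Matrix.mul_smul, Matrix.smul_mul, smul_smul, mul_inv_cancel₀ hl,
      one_smul, Matrix.mul_add, Matrix.add_mul, Matrix.mul_one, Matrix.neg_mul, Matrix.mul_neg,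
      neg_neg, Matrix.mul_assoc]
    abel
  rw [smul_one_sub_fromRows_mul_fromCols, det_fromBlocks₂₂, hschur, det_smul]

theorem det_smul_one_sub_fromRows_mul_fromCols_eq_zero_iff (hl : l ≠ 0)
    (hD : IsUnit (l • 1 - X₂ * Y₂)) :
    (l • 1 - fromRows X₁ X₂ * fromCols Y₁ Y₂).det = 0
      ↔ (1 - X₁ * (l • 1 - Y₂ * X₂)⁻¹ * Y₁).det = 0 := by
  have hDdet : (l • 1 - X₂ * Y₂).det ≠ 0 := ((isUnit_iff_isUnit_det _).mp hD).ne_zero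
  rw [det_smul_one_sub_fromRows_mul_fromCols X₁ X₂ Y₁ Y₂ hl hD]
  simp [hDdet, hl]

end Schur

end Matrix

/-- **Deterministic eigen-equation reduction (Schur complement / in-out exchange).**
Let `B1` be an `M × n` complex matrix, `B2` an `r × n` complex matrix (with `r = p - M`),
`B` the `p × n` matrix obtained by stacking `B1` on top of `B2`, and `l ≠ 0` a scalar such
that `l • I_r - (1/n) B2 B2ᴴ` is invertible.  Then `l • I_n - (1/n) B2ᴴ B2` is also
invertible, and `det (l • I_p - (1/n) B Bᴴ) = 0` if and only if
`det (I_M - (1/n) B1 (l • I_n - (1/n) B2ᴴ B2)⁻¹ B1ᴴ) = 0`. -/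
theorem statement11 {M r n : ℕ}
    (B1 : Matrix (Fin M) (Fin n) ℂ) (B2 : Matrix (Fin r) (Fin n) ℂ)
    (l : ℂ) (hl : l ≠ 0)
    (hinv : IsUnit (l • (1 : Matrix (Fin r) (Fin r) ℂ) - (n : ℂ)⁻¹ • (B2 * B2ᴴ))) :
    IsUnit (l • (1 : Matrix (Fin n) (Fin n) ℂ) - (n : ℂ)⁻¹ • (B2ᴴ * B2)) ∧
    ((l • (1 : Matrix (Fin M ⊕ Fin r) (Fin M ⊕ Fin r) ℂ)
          - (n : ℂ)⁻¹ • (Matrix.fromRows B1 B2 * (Matrix.fromRows B1 B2)ᴴ)).det = 0 ↔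
      ((1 : Matrix (Fin M) (Fin M) ℂ)
          - (n : ℂ)⁻¹ • (B1 * (l • (1 : Matrix (Fin n) (Fin n) ℂ)
              - (n : ℂ)⁻¹ • (B2ᴴ * B2))⁻¹ * B1ᴴ)).det = 0) := by
  set c : ℂ := (n : ℂ)⁻¹
  have hgram : c • (fromRows B1 B2 * (fromRows B1 B2)ᴴ)
      = fromRows (c • B1) (c • B2) * fromCols B1ᴴ B2ᴴ := by
    simp only [conjTranspose_fromRows_eq_fromCols_conjTranspose, fromRows_mul_fromCols,
      fromBlocks_smul, Matrix.smul_mul]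
  have hD : IsUnit (l • 1 - c • B2 * B2ᴴ) := by rwa [Matrix.smul_mul]
  have hS := isUnit_smul_one_sub_mul_comm (c • B2) B2ᴴ hl hD
  rw [Matrix.mul_smul] at hS
  refine ⟨hS, ?_⟩
  rw [hgram, det_smul_one_sub_fromRows_mul_fromCols_eq_zero_iff _ _ _ _ hl hD, Matrix.mul_smul,
    Matrix.smul_mul, Matrix.smul_mul]
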